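/- arXiv:2210.12516 — 6 statements merged into one kernel-verified Lean document; each statement's English description precedes it below -/
import Mathlib

section
/- Let m > 0 and λ ∈ ℂ with λ ∉ (−∞,−m] ∪ [m,∞). Define a_λ(ξ) := (ξ²+m²)^{1/2}/(ξ²+m²−λ²) for ξ ∈ ℝᵈ (where ξ² = |ξ|²). Then sup_{ξ∈ℝᵈ} |a_λ(ξ)| ≤ (|λ|+m)/dist(λ², [m²,∞)). -/
open scoped RealInnerProductSpace

/-!
For `u ≥ m` write `D` for the distance from `λ²` to `[m², ∞)`; the claim is
`u D ≤ (|λ| + m) |u² - λ²|`. If `u ≤ |λ| + m` this is just `D ≤ |u² - λ²|`. Otherwise, the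
function `x ↦ |x² - λ²| / x` is nondecreasing on `[|λ|, ∞)`, so
`D ≤ |(|λ| + m)² - λ²| ≤ (|λ| + m) |u² - λ²| / u`.
-/

open Metric Complex

lemma isClosed_setOf_exists_le_ofReal (a : ℝ) :
    IsClosed {z : ℂ | ∃ t : ℝ, a ≤ t ∧ z = (t : ℂ)} := by
  have : {z : ℂ | ∃ t : ℝ, a ≤ t ∧ z = (t : ℂ)} = ofReal '' Set.Ici a := by
    ext z
    exact ⟨fun ⟨t, ht, h⟩ => ⟨t, ht, h.symm⟩, fun ⟨t, ht, h⟩ => ⟨t, ht, h.symm⟩⟩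
  rw [this]
  exact isometry_ofReal.isClosedEmbedding.isClosedMap _ isClosed_Ici

lemma infDist_setOf_exists_le_ofReal_le {a x : ℝ} (hx : a ≤ x) (w : ℂ) :
    infDist w {z : ℂ | ∃ t : ℝ, a ≤ t ∧ z = (t : ℂ)} ≤ ‖(x : ℂ) - w‖ := by
  rw [← dist_eq, dist_comm]
  exact infDist_le_dist_of_mem ⟨x, hx, rfl⟩

lemma sq_notMem_setOf_exists_le_ofReal {m : ℝ} {lam : ℂ}
    (hlam : ∀ t : ℝ, (t ≤ -m ∨ m ≤ t) → lam ≠ (t : ℂ)) :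
    lam ^ 2 ∉ {z : ℂ | ∃ t : ℝ, m ^ 2 ≤ t ∧ z = (t : ℂ)} := by
  rintro ⟨t, ht, hsq⟩
  have hmt : m ≤ √t := Real.le_sqrt_of_sq_le ht
  have hsq' : lam ^ 2 = ((√t : ℝ) : ℂ) ^ 2 := by
    rw [hsq, ← ofReal_pow, Real.sq_sqrt ((sq_nonneg m).trans ht)]
  rcases sq_eq_sq_iff_eq_or_eq_neg.mp hsq' with h | h
  · exact hlam (√t) (Or.inr hmt) h
  · exact hlam (-√t) (Or.inl (neg_le_neg hmt)) (by rw [h, ofReal_neg])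

lemma infDist_sq_setOf_exists_le_ofReal_pos {m : ℝ} {lam : ℂ}
    (hlam : ∀ t : ℝ, (t ≤ -m ∨ m ≤ t) → lam ≠ (t : ℂ)) :
    0 < infDist (lam ^ 2) {z : ℂ | ∃ t : ℝ, m ^ 2 ≤ t ∧ z = (t : ℂ)} :=
  ((isClosed_setOf_exists_le_ofReal _).notMem_iff_infDist_pos ⟨_, _, le_rfl, rfl⟩).mp
    (sq_notMem_setOf_exists_le_ofReal hlam)

lemma sq_norm_ofReal_sub (x : ℝ) (w : ℂ) : ‖(x : ℂ) - w‖ ^ 2 = (x - w.re) ^ 2 + w.im ^ 2 := by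
  rw [Complex.sq_norm, normSq_apply]
  simp only [sub_re, sub_im, ofReal_re, ofReal_im]
  ring

lemma mul_norm_sq_sub_le {w : ℂ} {x y : ℝ} (hx : 0 ≤ x) (hxy : x ≤ y) (hw : ‖w‖ ≤ x ^ 2) :
    y * ‖((x ^ 2 : ℝ) : ℂ) - w‖ ≤ x * ‖((y ^ 2 : ℝ) : ℂ) - w‖ := by
  have hw2 : w.re ^ 2 + w.im ^ 2 = ‖w‖ ^ 2 := by rw [Complex.sq_norm, normSq_apply]; ring
  have hx2y2 : x ^ 2 ≤ y ^ 2 := pow_le_pow_left₀ hx hxy 2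
  have hw4 : ‖w‖ ^ 2 ≤ x ^ 2 * y ^ 2 := by
    rw [sq]; exact mul_le_mul hw (hw.trans hx2y2) (norm_nonneg w) (sq_nonneg x)
  have hy : 0 ≤ y := hx.trans hxy
  refine (pow_le_pow_iff_left₀ (by positivity) (by positivity) two_ne_zero).mp ?_
  rw [mul_pow, mul_pow, sq_norm_ofReal_sub, sq_norm_ofReal_sub]
  -- the difference of the two sides is `(y² - x²) (x² y² - ‖w‖²)`
  nlinarith [mul_nonneg (sub_nonneg.2 hx2y2) (sub_nonneg.2 hw4)]

lemma mul_infDist_sq_setOf_exists_le_ofReal_le {m : ℝ} (hm : 0 ≤ m) (lam : ℂ) {u : ℝ}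
    (hmu : m ≤ u) :
    u * infDist (lam ^ 2) {z : ℂ | ∃ t : ℝ, m ^ 2 ≤ t ∧ z = (t : ℂ)}
      ≤ (‖lam‖ + m) * ‖((u ^ 2 : ℝ) : ℂ) - lam ^ 2‖ := by
  rcases le_or_gt u (‖lam‖ + m) with hu | hu
  · exact mul_le_mul hu (infDist_setOf_exists_le_ofReal_le (pow_le_pow_left₀ hm hmu 2) _)
      infDist_nonneg (by positivity)
  · have hlam : ‖lam ^ 2‖ ≤ (‖lam‖ + m) ^ 2 := by
      rw [norm_pow]
      exact pow_le_pow_left₀ (norm_nonneg lam) (le_add_of_nonneg_right hm) 2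
    calc u * infDist (lam ^ 2) {z : ℂ | ∃ t : ℝ, m ^ 2 ≤ t ∧ z = (t : ℂ)}
        ≤ u * ‖(((‖lam‖ + m) ^ 2 : ℝ) : ℂ) - lam ^ 2‖ := by
          refine mul_le_mul_of_nonneg_left (infDist_setOf_exists_le_ofReal_le ?_ _) (hm.trans hmu)
          exact pow_le_pow_left₀ hm (le_add_of_nonneg_left (norm_nonneg lam)) 2
      _ ≤ (‖lam‖ + m) * ‖((u ^ 2 : ℝ) : ℂ) - lam ^ 2‖ :=
          mul_norm_sq_sub_le (by positivity) hu.le hlam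

/-- bound on `a_λ` for the Klein-Gordon pencil. -/
theorem stmt2 (d : ℕ) (m : ℝ) (hm : 0 < m) (lam : ℂ)
    (hlam : ∀ t : ℝ, (t ≤ -m ∨ m ≤ t) → lam ≠ (t : ℂ)) :
    ∀ ξ : EuclideanSpace ℝ (Fin d),
      norm (((Real.sqrt (‖ξ‖ ^ 2 + m ^ 2) : ℝ) : ℂ) /
          (((‖ξ‖ ^ 2 + m ^ 2 : ℝ) : ℂ) - lam ^ 2))
        ≤ (norm lam + m) /
            Metric.infDist (lam ^ 2) {z : ℂ | ∃ t : ℝ, m ^ 2 ≤ t ∧ z = (t : ℂ)} := by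
  intro ξ
  have hs : m ^ 2 ≤ ‖ξ‖ ^ 2 + m ^ 2 := le_add_of_nonneg_left (sq_nonneg _)
  have hD := infDist_sq_setOf_exists_le_ofReal_pos hlam
  have hden : 0 < ‖((‖ξ‖ ^ 2 + m ^ 2 : ℝ) : ℂ) - lam ^ 2‖ :=
    hD.trans_le (infDist_setOf_exists_le_ofReal_le hs _)
  rw [norm_div, Complex.norm_of_nonneg (Real.sqrt_nonneg _), div_le_div_iff₀ hden hD]
  have key := mul_infDist_sq_setOf_exists_le_ofReal_le hm.le lam (Real.le_sqrt_of_sq_le hs)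
  rwa [Real.sq_sqrt ((sq_nonneg m).trans hs)] at key
end

section
/- Let H be a Hilbert space, H₀ a self-adjoint operator with H₀ ≥ m² > 0, and V a symmetric operator with dom(H₀^{1/2}) ⊂ dom(V). Suppose there exist constants a ≥ 0 and 0 ≤ b < 1 such that ‖Vx‖² ≤ a²‖x‖² + b²‖H₀^{1/2}x‖² for all x ∈ dom(H₀^{1/2}). If λ ∈ ℂ∖ℝ and u ∈ dom(H₀) with ‖u‖ = 1 satisfies H₀u − (V−λ)²u = 0, then Re λ = ⟨Vu,u⟩ and |λ|² = ‖Vu‖² − ‖H₀^{1/2}u‖² ≤ a²/(1−b²) − m². -/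
/-!
Pairing the eigenvalue equation with `u` and using the symmetry of `V` turns it into the scalar
quadratic `λ² - 2⟪u, Vu⟫λ + (‖Vu‖² - ‖H₀^{1/2}u‖²) = 0` with real coefficients. A non-real root of
such a quadratic has real part `⟪u, Vu⟫` and squared modulus equal to the constant term, and the
enclosure follows by feeding the relative bound for `V` and `H₀ ≥ m²` into `|λ|² = ‖Vu‖² - ‖S u‖²`.
-/

open scoped InnerProductSpace ComplexConjugate

theorem Complex.re_eq_and_normSq_eq_of_sq_sub_mul_add_eq_zero {z : ℂ} {p q : ℝ}
    (hz : z.im ≠ 0) (h : z ^ 2 - 2 * p * z + q = 0) : z.re = p ∧ normSq z = q := by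
  have hre := congrArg Complex.re h
  have him := congrArg Complex.im h
  simp only [sq, sub_re, add_re, sub_im, add_im, mul_re, mul_im, ofReal_re, ofReal_im,
    re_ofNat, im_ofNat, zero_re, zero_im] at hre him
  have hzre : z.re = p := by
    have : 2 * z.im * (z.re - p) = 0 := by linarith
    simpa [hz, sub_eq_zero] using this
  refine ⟨hzre, ?_⟩
  rw [normSq_apply]
  subst hzre
  linarith

theorem sub_le_div_one_sub_sq_sub {a b m s w : ℝ} (hb0 : 0 ≤ b) (hb : b < 1)
    (hs : m ^ 2 ≤ s) (hsw : s ≤ w) (hw : w ≤ a ^ 2 + b ^ 2 * s) :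
    w - s ≤ a ^ 2 / (1 - b ^ 2) - m ^ 2 := by
  have hc : 0 < 1 - b ^ 2 := by nlinarith
  rw [le_sub_iff_add_le, le_div_iff₀ hc]
  -- `(1 - b²)(w - s + m²) ≤ (1 - b²)w ≤ a² - b²(w - s)`
  nlinarith [mul_nonneg hc.le (sub_nonneg.2 hs), mul_nonneg (sq_nonneg b) (sub_nonneg.2 hsw)]

namespace LinearPMap

variable {𝕜 E : Type*} [RCLike 𝕜] [NormedAddCommGroup E] [InnerProductSpace 𝕜 E]
  {V : E →ₗ.[𝕜] E}

theorem inner_apply_self_eq_re (hV : ∀ x y : V.domain, ⟪V x, (y : E)⟫_𝕜 = ⟪(x : E), V y⟫_𝕜)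
    (x : V.domain) : ⟪(x : E), V x⟫_𝕜 = (RCLike.re ⟪(x : E), V x⟫_𝕜 : 𝕜) :=
  (RCLike.conj_eq_iff_re.mp ((inner_conj_symm _ _).trans (hV x x))).symm

end LinearPMap

/-- `S` plays the role of `H₀^{1/2}`. -/
theorem stmt7_general {H : Type*} [NormedAddCommGroup H] [InnerProductSpace ℂ H]
    (m a b : ℝ) (hb0 : 0 ≤ b) (hb : b < 1)
    (H0 V S : H →ₗ.[ℂ] H)
    (hdSV : S.domain ≤ V.domain)
    (hd0S : H0.domain ≤ S.domain)
    -- `V` is symmetric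
    (hVsym : ∀ x y : V.domain, ⟪V x, (y : H)⟫_ℂ = ⟪(x : H), V y⟫_ℂ)
    -- `H₀` is self-adjoint with `⟨H₀x,x⟩ = ‖H₀^{1/2}x‖²` on `dom H₀`
    (hsq : ∀ x : H0.domain, ⟪H0 x, (x : H)⟫_ℂ = ((‖S ⟨(x : H), hd0S x.2⟩‖ ^ 2 : ℝ) : ℂ))
    -- `H₀ ≥ m² > 0`
    (hlow : ∀ x : S.domain, m ^ 2 * ‖(x : H)‖ ^ 2 ≤ ‖S x‖ ^ 2)
    -- relative bound for `V` with respect to `H₀^{1/2}`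
    (hrel : ∀ x : S.domain,
      ‖V ⟨(x : H), hdSV x.2⟩‖ ^ 2 ≤ a ^ 2 * ‖(x : H)‖ ^ 2 + b ^ 2 * ‖S x‖ ^ 2)
    (lam : ℂ) (hlam : lam.im ≠ 0)
    (u : H) (hu0 : u ∈ H0.domain) (huV : u ∈ V.domain)
    (hVu : V ⟨u, huV⟩ ∈ V.domain)
    (hnorm : ‖u‖ = 1)
    -- the eigenvalue equation `H₀u − (V−λ)²u = 0`
    (heq : H0 ⟨u, hu0⟩ - V ⟨V ⟨u, huV⟩, hVu⟩ + (2 * lam) • V ⟨u, huV⟩ - lam ^ 2 • u = 0) :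
    ((lam.re : ℂ) = ⟪V ⟨u, huV⟩, u⟫_ℂ) ∧
    (‖lam‖ ^ 2 = ‖V ⟨u, huV⟩‖ ^ 2 - ‖S ⟨u, hd0S hu0⟩‖ ^ 2) ∧
    ‖lam‖ ^ 2 ≤ a ^ 2 / (1 - b ^ 2) - m ^ 2 := by
  have hVu_real : ⟪u, V ⟨u, huV⟩⟫_ℂ = ((⟪u, V ⟨u, huV⟩⟫_ℂ).re : ℂ) :=
    LinearPMap.inner_apply_self_eq_re hVsym ⟨u, huV⟩
  have hH0u : ⟪u, H0 ⟨u, hu0⟩⟫_ℂ = ((‖S ⟨u, hd0S hu0⟩‖ ^ 2 : ℝ) : ℂ) := by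
    rw [← inner_conj_symm, hsq ⟨u, hu0⟩, Complex.conj_ofReal]
  have hVVu : ⟪u, V ⟨V ⟨u, huV⟩, hVu⟩⟫_ℂ = ((‖V ⟨u, huV⟩‖ ^ 2 : ℝ) : ℂ) := by
    rw [← hVsym ⟨u, huV⟩ ⟨_, hVu⟩, inner_self_eq_norm_sq_to_K]
    norm_cast
  have hquad : lam ^ 2 - 2 * ((⟪u, V ⟨u, huV⟩⟫_ℂ).re : ℂ) * lam
      + ((‖V ⟨u, huV⟩‖ ^ 2 - ‖S ⟨u, hd0S hu0⟩‖ ^ 2 : ℝ) : ℂ) = 0 := by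
    have h := congrArg (⟪u, ·⟫_ℂ) heq
    simp only [inner_sub_right, inner_add_right, inner_smul_right, inner_zero_right,
      inner_self_eq_norm_sq_to_K, hnorm, hH0u, hVVu] at h
    rw [hVu_real] at h
    push_cast at h ⊢
    linear_combination -h
  obtain ⟨hre, hnormSq⟩ := Complex.re_eq_and_normSq_eq_of_sq_sub_mul_add_eq_zero hlam hquad
  have hnorm_lam : ‖lam‖ ^ 2 = ‖V ⟨u, huV⟩‖ ^ 2 - ‖S ⟨u, hd0S hu0⟩‖ ^ 2 := by
    rw [Complex.sq_norm, hnormSq]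
  refine ⟨by rw [hre, hVsym ⟨u, huV⟩ ⟨u, huV⟩]; exact hVu_real.symm, hnorm_lam, ?_⟩
  rw [hnorm_lam]
  exact sub_le_div_one_sub_sq_sub hb0 hb (by simpa [hnorm] using hlow ⟨u, hd0S hu0⟩)
    (sub_nonneg.1 (hnorm_lam ▸ sq_nonneg _)) (by simpa [hnorm] using hrel ⟨u, hd0S hu0⟩)

/-- enclosure for non-real eigenvalues of the Klein-Gordon pencil
`T_V(λ) = H₀ − (V−λ)²` under a relative bound `‖Vx‖² ≤ a²‖x‖² + b²‖H₀^{1/2}x‖²`.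
Here `S` plays the role of `H₀^{1/2}`. -/
theorem stmt7 {H : Type*} [NormedAddCommGroup H] [InnerProductSpace ℂ H] [CompleteSpace H]
    (m a b : ℝ) (hm : 0 < m) (ha : 0 ≤ a) (hb0 : 0 ≤ b) (hb : b < 1)
    (H0 V S : H →ₗ.[ℂ] H)
    (hdSV : S.domain ≤ V.domain)
    (hd0S : H0.domain ≤ S.domain)
    -- `V` is symmetric
    (hVsym : ∀ x y : V.domain, ⟪V x, (y : H)⟫_ℂ = ⟪(x : H), V y⟫_ℂ)
    -- `H₀` is self-adjoint with `⟨H₀x,x⟩ = ‖H₀^{1/2}x‖²` on `dom H₀`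
    (hsq : ∀ x : H0.domain, ⟪H0 x, (x : H)⟫_ℂ = ((‖S ⟨(x : H), hd0S x.2⟩‖ ^ 2 : ℝ) : ℂ))
    -- `H₀ ≥ m² > 0`
    (hlow : ∀ x : S.domain, m ^ 2 * ‖(x : H)‖ ^ 2 ≤ ‖S x‖ ^ 2)
    -- relative bound for `V` with respect to `H₀^{1/2}`
    (hrel : ∀ x : S.domain,
      ‖V ⟨(x : H), hdSV x.2⟩‖ ^ 2 ≤ a ^ 2 * ‖(x : H)‖ ^ 2 + b ^ 2 * ‖S x‖ ^ 2)
    (lam : ℂ) (hlam : lam.im ≠ 0)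
    (u : H) (hu0 : u ∈ H0.domain) (huV : u ∈ V.domain)
    (hVu : V ⟨u, huV⟩ ∈ V.domain)
    (hnorm : ‖u‖ = 1)
    -- the eigenvalue equation `H₀u − (V−λ)²u = 0`
    (heq : H0 ⟨u, hu0⟩ - V ⟨V ⟨u, huV⟩, hVu⟩ + (2 * lam) • V ⟨u, huV⟩ - lam ^ 2 • u = 0) :
    ((lam.re : ℂ) = ⟪V ⟨u, huV⟩, u⟫_ℂ) ∧
    (‖lam‖ ^ 2 = ‖V ⟨u, huV⟩‖ ^ 2 - ‖S ⟨u, hd0S hu0⟩‖ ^ 2) ∧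
    ‖lam‖ ^ 2 ≤ a ^ 2 / (1 - b ^ 2) - m ^ 2 :=
  stmt7_general m a b hb0 hb H0 V S hdSV hd0S hVsym hsq hlow hrel lam hlam u hu0 huV hVu hnorm heq
end

section
/- Let H be a Hilbert space, H₀ ≥ m² > 0 self-adjoint, and V symmetric with dom(H₀^{1/2}) ⊂ dom(V). If λ ∈ ℂ∖ℝ, u ∈ dom(H₀), ‖u‖ = 1, and H₀u − (V−λ)²u = 0, then taking real and imaginary parts of ⟨T_V(λ)u,u⟩ = 0 yields Re λ = ⟨Vu,u⟩ and |λ|² = ‖Vu‖² − ‖H₀^{1/2}u‖². In particular ‖Vu‖² ≥ ‖H₀^{1/2}u‖² ≥ m², so every non-real eigenvalue λ of the pencil satisfies |λ|² ≤ ‖Vu‖² − m². -/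
open scoped InnerProductSpace

/-!
Pairing the eigenvalue equation `H₀u − (V−λ)²u = 0` with `u` gives the scalar quadratic
`‖H₀^{1/2}u‖² − ‖Vu‖² + 2λ⟨Vu,u⟩ − λ² = 0` whose coefficients are real. Its imaginary part,
divided by `Im λ ≠ 0`, gives `Re λ = ⟨Vu,u⟩`; substituting this into the real part leaves
`|λ|² = ‖Vu‖² − ‖H₀^{1/2}u‖²`, and the lower bound `H₀ ≥ m²` finishes.
-/

namespace Complex

theorem re_eq_and_sq_norm_eq_of_quadratic_eq_zero {lam : ℂ} (hlam : lam.im ≠ 0) {a s v : ℝ}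
    (h : (s : ℂ) - v + 2 * lam * a - lam ^ 2 = 0) :
    lam.re = a ∧ ‖lam‖ ^ 2 = v - s := by
  have him : lam.im * (a - lam.re) = 0 := by
    have := congrArg im h
    simp only [pow_two, sub_im, add_im, ofReal_im, sub_self, mul_im, mul_re, re_ofNat, im_ofNat,
      zero_mul, sub_zero, mul_zero, add_zero, ofReal_re, zero_add, zero_im] at this
    linear_combination this / 2
  have hre : lam.re = a := by
    linarith [(mul_eq_zero.mp him).resolve_left hlam]
  refine ⟨hre, ?_⟩
  have := congrArg re h
  simp only [pow_two, sub_re, add_re, ofReal_re, mul_re, re_ofNat, im_ofNat, zero_mul, sub_zero,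
    mul_im, add_zero, ofReal_im, mul_zero, zero_re] at this
  rw [← hre] at this
  rw [Complex.sq_norm, normSq_apply]
  linear_combination this

end Complex

namespace LinearPMap

variable {H : Type*} [NormedAddCommGroup H] [InnerProductSpace ℂ H] {V : H →ₗ.[ℂ] H}

theorem inner_map_self_eq_re_of_symm (hV : ∀ x y : V.domain, ⟪V x, (y : H)⟫_ℂ = ⟪(x : H), V y⟫_ℂ)
    (x : V.domain) : ⟪V x, (x : H)⟫_ℂ = ((⟪V x, (x : H)⟫_ℂ).re : ℂ) :=
  (Complex.conj_eq_iff_re.mp (by rw [inner_conj_symm]; exact (hV x x).symm)).symm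

theorem inner_map_map_self_of_symm (hV : ∀ x y : V.domain, ⟪V x, (y : H)⟫_ℂ = ⟪(x : H), V y⟫_ℂ)
    (x : V.domain) (hx : V x ∈ V.domain) :
    ⟪(x : H), V ⟨V x, hx⟩⟫_ℂ = ((‖V x‖ ^ 2 : ℝ) : ℂ) := by
  rw [← hV x ⟨V x, hx⟩, inner_self_eq_norm_sq_to_K]
  norm_cast

end LinearPMap

theorem stmt8_general {H : Type*} [NormedAddCommGroup H] [InnerProductSpace ℂ H]
    (m : ℝ)
    (H0 V S : H →ₗ.[ℂ] H)
    (hd0S : H0.domain ≤ S.domain)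
    (hVsym : ∀ x y : V.domain, ⟪V x, (y : H)⟫_ℂ = ⟪(x : H), V y⟫_ℂ)
    (hsq : ∀ x : H0.domain, ⟪H0 x, (x : H)⟫_ℂ = ((‖S ⟨(x : H), hd0S x.2⟩‖ ^ 2 : ℝ) : ℂ))
    (hlow : ∀ x : S.domain, m ^ 2 * ‖(x : H)‖ ^ 2 ≤ ‖S x‖ ^ 2)
    (lam : ℂ) (hlam : lam.im ≠ 0)
    (u : H) (hu0 : u ∈ H0.domain) (huV : u ∈ V.domain)
    (hVu : V ⟨u, huV⟩ ∈ V.domain)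
    (hnorm : ‖u‖ = 1)
    (heq : H0 ⟨u, hu0⟩ - V ⟨V ⟨u, huV⟩, hVu⟩ + (2 * lam) • V ⟨u, huV⟩ - lam ^ 2 • u = 0) :
    ((lam.re : ℂ) = ⟪V ⟨u, huV⟩, u⟫_ℂ) ∧
    (‖lam‖ ^ 2 = ‖V ⟨u, huV⟩‖ ^ 2 - ‖S ⟨u, hd0S hu0⟩‖ ^ 2) ∧
    (m ^ 2 ≤ ‖S ⟨u, hd0S hu0⟩‖ ^ 2 ∧ ‖S ⟨u, hd0S hu0⟩‖ ^ 2 ≤ ‖V ⟨u, huV⟩‖ ^ 2) ∧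
    ‖lam‖ ^ 2 ≤ ‖V ⟨u, huV⟩‖ ^ 2 - m ^ 2 := by
  have ha := LinearPMap.inner_map_self_eq_re_of_symm hVsym ⟨u, huV⟩
  have hH0 : ⟪u, H0 ⟨u, hu0⟩⟫_ℂ = ((‖S ⟨u, hd0S hu0⟩‖ ^ 2 : ℝ) : ℂ) := by
    rw [← inner_conj_symm, hsq, Complex.conj_ofReal]
  have hquad : ((‖S ⟨u, hd0S hu0⟩‖ ^ 2 : ℝ) : ℂ) - (‖V ⟨u, huV⟩‖ ^ 2 : ℝ)
      + 2 * lam * ((⟪V ⟨u, huV⟩, u⟫_ℂ).re : ℝ) - lam ^ 2 = 0 := by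
    have h := congrArg (fun w => ⟪u, w⟫_ℂ) heq
    simp only [inner_sub_right, inner_add_right, inner_smul_right, inner_zero_right,
      hH0, LinearPMap.inner_map_map_self_of_symm hVsym ⟨u, huV⟩ hVu, ← hVsym ⟨u, huV⟩ ⟨u, huV⟩,
      inner_self_eq_norm_sq_to_K, hnorm, RCLike.ofReal_one, one_pow, mul_one] at h
    rw [← ha]
    linear_combination h
  obtain ⟨hre, hnorm_lam⟩ := Complex.re_eq_and_sq_norm_eq_of_quadratic_eq_zero hlam hquad
  have hm : m ^ 2 ≤ ‖S ⟨u, hd0S hu0⟩‖ ^ 2 := by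
    simpa [hnorm] using hlow ⟨u, hd0S hu0⟩
  refine ⟨by rw [hre, ← ha], hnorm_lam, ⟨hm, ?_⟩, ?_⟩ <;> nlinarith [sq_nonneg ‖lam‖]

/-- for a non-real eigenvalue `λ` of the Klein-Gordon pencil
`T_V(λ) = H₀ − (V−λ)²` with normalized eigenfunction `u`,
`Re λ = ⟨Vu,u⟩`, `|λ|² = ‖Vu‖² − ‖H₀^{1/2}u‖²`, and since
`‖Vu‖² ≥ ‖H₀^{1/2}u‖² ≥ m²`, one has `|λ|² ≤ ‖Vu‖² − m²`.
Here `S` plays the role of `H₀^{1/2}`. -/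
theorem stmt8 {H : Type*} [NormedAddCommGroup H] [InnerProductSpace ℂ H] [CompleteSpace H]
    (m : ℝ) (hm : 0 < m)
    (H0 V S : H →ₗ.[ℂ] H)
    (hdSV : S.domain ≤ V.domain)
    (hd0S : H0.domain ≤ S.domain)
    (hVsym : ∀ x y : V.domain, ⟪V x, (y : H)⟫_ℂ = ⟪(x : H), V y⟫_ℂ)
    (hsq : ∀ x : H0.domain, ⟪H0 x, (x : H)⟫_ℂ = ((‖S ⟨(x : H), hd0S x.2⟩‖ ^ 2 : ℝ) : ℂ))
    (hlow : ∀ x : S.domain, m ^ 2 * ‖(x : H)‖ ^ 2 ≤ ‖S x‖ ^ 2)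
    (lam : ℂ) (hlam : lam.im ≠ 0)
    (u : H) (hu0 : u ∈ H0.domain) (huV : u ∈ V.domain)
    (hVu : V ⟨u, huV⟩ ∈ V.domain)
    (hnorm : ‖u‖ = 1)
    (heq : H0 ⟨u, hu0⟩ - V ⟨V ⟨u, huV⟩, hVu⟩ + (2 * lam) • V ⟨u, huV⟩ - lam ^ 2 • u = 0) :
    ((lam.re : ℂ) = ⟪V ⟨u, huV⟩, u⟫_ℂ) ∧
    (‖lam‖ ^ 2 = ‖V ⟨u, huV⟩‖ ^ 2 - ‖S ⟨u, hd0S hu0⟩‖ ^ 2) ∧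
    (m ^ 2 ≤ ‖S ⟨u, hd0S hu0⟩‖ ^ 2 ∧ ‖S ⟨u, hd0S hu0⟩‖ ^ 2 ≤ ‖V ⟨u, huV⟩‖ ^ 2) ∧
    ‖lam‖ ^ 2 ≤ ‖V ⟨u, huV⟩‖ ^ 2 - m ^ 2 :=
  stmt8_general m H0 V S hd0S hVsym hsq hlow lam hlam u hu0 huV hVu hnorm heq
end

section
/- Let H be a Hilbert space, H₀ ≥ m² > 0 self-adjoint, V bounded symmetric with V H₀^{-1/2} compact. Then every non-real eigenvalue λ of the pencil T_V(λ) = H₀ − (V−λ)² satisfies |λ|² ≤ ‖V‖² − m² and Re λ ∈ W(V), where W(V) is the numerical range of V. -/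
open scoped InnerProductSpace

/- Pairing the eigenvalue equation `H₀u − V²u + 2λVu − λ²u = 0` with `u` gives
`s − b + 2λa − λ²n = 0` with real `s = ‖H₀^{1/2}u‖²`, `b = ‖Vu‖²`, `a = ⟨Vu,u⟩`, `n = ‖u‖²`.
As `Im λ ≠ 0`, the imaginary part forces `a = (Re λ) n`, and then the real part reads
`s + |λ|² n = b`; the bounds `b ≤ ‖V‖² n` and `s ≥ m² n` finish the proof. -/

theorem Complex.eq_re_mul_and_add_sq_norm_mul_eq {s b a n : ℝ} {z : ℂ} (hz : z.im ≠ 0)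
    (h : (s : ℂ) - b + 2 * z * a - z ^ 2 * n = 0) :
    a = z.re * n ∧ s + ‖z‖ ^ 2 * n = b := by
  have him := congrArg Complex.im h
  have hre := congrArg Complex.re h
  simp only [Complex.sub_im, Complex.add_im, Complex.mul_im, Complex.sub_re, Complex.add_re,
    Complex.mul_re, Complex.ofReal_re, Complex.ofReal_im, Complex.re_ofNat, Complex.im_ofNat,
    pow_two, Complex.zero_re, Complex.zero_im] at him hre
  have ha : a = z.re * n := by
    have : z.im * (a - z.re * n) = 0 := by linear_combination him / 2
    linarith [(mul_eq_zero.mp this).resolve_left hz]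
  refine ⟨ha, ?_⟩
  rw [Complex.sq_norm, Complex.normSq_apply]
  linear_combination hre - 2 * z.re * ha

section

variable {H : Type*} [NormedAddCommGroup H] [InnerProductSpace ℂ H]

theorem inner_eq_re_mul_and_add_sq_norm_mul_eq_of_pencil {V : H →L[ℂ] H}
    (hV : ∀ x y : H, ⟪V x, y⟫_ℂ = ⟪x, V y⟫_ℂ) {w u : H} {s : ℝ} (hw : ⟪w, u⟫_ℂ = s)
    {lam : ℂ} (hlam : lam.im ≠ 0)
    (heq : w - V (V u) + (2 * lam) • V u - lam ^ 2 • u = 0) :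
    ⟪V u, u⟫_ℂ = (lam.re * ‖u‖ ^ 2 : ℝ) ∧ s + ‖lam‖ ^ 2 * ‖u‖ ^ 2 = ‖V u‖ ^ 2 := by
  set a : ℝ := (⟪V u, u⟫_ℂ).re
  have ha : ⟪V u, u⟫_ℂ = a :=
    (LinearMap.IsSymmetric.coe_re_inner_apply_self (T := (V : H →ₗ[ℂ] H)) hV u).symm
  have hpair := congrArg (⟪u, ·⟫_ℂ) heq
  simp only [inner_sub_right, inner_add_right, inner_smul_right, inner_zero_right, ← hV u, ha,
    inner_self_eq_norm_sq_to_K, ← inner_conj_symm u w, hw, Complex.conj_ofReal] at hpair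
  obtain ⟨hre, hnorm⟩ := Complex.eq_re_mul_and_add_sq_norm_mul_eq (s := s)
    (b := ‖V u‖ ^ 2) (a := a) (n := ‖u‖ ^ 2) hlam (by push_cast; linear_combination hpair)
  exact ⟨hre ▸ ha, hnorm⟩

theorem exists_norm_eq_one_inner_eq_of_inner_eq_mul_sq_norm (V : H →L[ℂ] H) {u : H}
    (hu : u ≠ 0) {r : ℝ} (h : ⟪V u, u⟫_ℂ = (r * ‖u‖ ^ 2 : ℝ)) :
    ∃ x : H, ‖x‖ = 1 ∧ (r : ℂ) = ⟪V x, x⟫_ℂ := by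
  have hnu : (‖u‖ : ℂ) ≠ 0 := by exact_mod_cast norm_ne_zero_iff.mpr hu
  refine ⟨(‖u‖ : ℂ)⁻¹ • u, ?_, ?_⟩
  · rw [norm_smul]
    simp [norm_ne_zero_iff.mpr hu]
  · rw [map_smul, inner_smul_left, inner_smul_right, h, Complex.conj_inv, Complex.conj_ofReal]
    push_cast
    field_simp

end

theorem stmt9_general {H : Type*} [NormedAddCommGroup H] [InnerProductSpace ℂ H]
    (m : ℝ)
    (H0 S : H →ₗ.[ℂ] H)
    (V : H →L[ℂ] H)
    (hd0S : H0.domain ≤ S.domain)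
    -- `V` is symmetric (bounded, hence self-adjoint)
    (hVsym : ∀ x y : H, ⟪V x, y⟫_ℂ = ⟪x, V y⟫_ℂ)
    -- `H₀` self-adjoint with `⟨H₀x,x⟩ = ‖H₀^{1/2}x‖²` and `H₀ ≥ m² > 0`
    (hsq : ∀ x : H0.domain, ⟪H0 x, (x : H)⟫_ℂ = ((‖S ⟨(x : H), hd0S x.2⟩‖ ^ 2 : ℝ) : ℂ))
    (hlow : ∀ x : S.domain, m ^ 2 * ‖(x : H)‖ ^ 2 ≤ ‖S x‖ ^ 2)
    -- `λ` is a non-real eigenvalue of the pencil, with eigenfunction `u ≠ 0`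
    (lam : ℂ) (hlam : lam.im ≠ 0)
    (u : H) (hu0 : u ∈ H0.domain) (hu : u ≠ 0)
    (heq : H0 ⟨u, hu0⟩ - V (V u) + (2 * lam) • V u - lam ^ 2 • u = 0) :
    ‖lam‖ ^ 2 ≤ ‖V‖ ^ 2 - m ^ 2 ∧
    ∃ x : H, ‖x‖ = 1 ∧ (lam.re : ℂ) = ⟪V x, x⟫_ℂ := by
  obtain ⟨hre, hnorm⟩ :=
    inner_eq_re_mul_and_add_sq_norm_mul_eq_of_pencil hVsym (hsq ⟨u, hu0⟩) hlam heq
  refine ⟨?_, exists_norm_eq_one_inner_eq_of_inner_eq_mul_sq_norm V hu hre⟩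
  have hn : 0 < ‖u‖ ^ 2 := by positivity
  have hVu : ‖V u‖ ^ 2 ≤ ‖V‖ ^ 2 * ‖u‖ ^ 2 := by
    rw [← mul_pow]
    exact pow_le_pow_left₀ (norm_nonneg _) (V.le_opNorm u) 2
  have hSu := hlow ⟨u, hd0S hu0⟩
  refine le_of_mul_le_mul_right ?_ hn
  linarith

/-- for `V` bounded symmetric with `V H₀^{-1/2}` compact, every non-real
eigenvalue `λ` of the pencil `T_V(λ) = H₀ − (V−λ)²` satisfies `|λ|² ≤ ‖V‖² − m²` and
`Re λ ∈ W(V)`. Here `S` plays the role of `H₀^{1/2}` and `Kc` of `V H₀^{-1/2}`. -/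
theorem stmt9 {H : Type*} [NormedAddCommGroup H] [InnerProductSpace ℂ H] [CompleteSpace H]
    (m : ℝ) (hm : 0 < m)
    (H0 S : H →ₗ.[ℂ] H)
    (V : H →L[ℂ] H)
    (hd0S : H0.domain ≤ S.domain)
    -- `V` is symmetric (bounded, hence self-adjoint)
    (hVsym : ∀ x y : H, ⟪V x, y⟫_ℂ = ⟪x, V y⟫_ℂ)
    -- `V H₀^{-1/2}` is compact: a compact operator `Kc` with `Kc ∘ H₀^{1/2} = V` on
    -- `dom H₀^{1/2}`
    (Kc : H →L[ℂ] H) (hKc : IsCompactOperator (⇑Kc))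
    (hKcS : ∀ x : S.domain, Kc (S x) = V (x : H))
    -- `H₀` self-adjoint with `⟨H₀x,x⟩ = ‖H₀^{1/2}x‖²` and `H₀ ≥ m² > 0`
    (hsq : ∀ x : H0.domain, ⟪H0 x, (x : H)⟫_ℂ = ((‖S ⟨(x : H), hd0S x.2⟩‖ ^ 2 : ℝ) : ℂ))
    (hlow : ∀ x : S.domain, m ^ 2 * ‖(x : H)‖ ^ 2 ≤ ‖S x‖ ^ 2)
    -- `λ` is a non-real eigenvalue of the pencil, with eigenfunction `u ≠ 0`
    (lam : ℂ) (hlam : lam.im ≠ 0)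
    (u : H) (hu0 : u ∈ H0.domain) (hu : u ≠ 0)
    (heq : H0 ⟨u, hu0⟩ - V (V u) + (2 * lam) • V u - lam ^ 2 • u = 0) :
    ‖lam‖ ^ 2 ≤ ‖V‖ ^ 2 - m ^ 2 ∧
    ∃ x : H, ‖x‖ = 1 ∧ (lam.re : ℂ) = ⟪V x, x⟫_ℂ :=
  stmt9_general m H0 S V hd0S hVsym hsq hlow lam hlam u hu0 hu heq
end

section
/- Let V ∈ L¹(ℝ) ∩ L∞(ℝ), m > 0, and suppose λ ∈ ℂ with λ² ∉ [m²,∞) is an eigenvalue of the Klein-Gordon pencil T_V(λ) = −d²/dx² + m² − (V−λ)² on L²(ℝ), i.e. there is a nonzero u ∈ H²(ℝ) with (−u'' + m²u − (V−λ)²u) = 0. Then 4|m²−λ²| ≤ ‖V² − 2λV‖²_{L¹(ℝ)}, and consequently 2|m²−λ²|^{1/2} ≤ ‖V‖²_{L²(ℝ)} + 2|λ|‖V‖_{L¹(ℝ)}. -/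
open MeasureTheory Set Filter Topology

/-!
Write `m² - λ² = k²` with `Re k > 0`, possible because `m² - λ²` lies in the slit plane, and
`W = V² - 2λV`. The eigenvalue equation reads `u'' = k²u - Wu`, and since `u` and `u'` are
bounded (they and their derivatives are in `L²`), the Green's function of `-d²/dx² + k²` gives
`2k u(p) = ∫ e^{-k|y-p|} W(y) u(y) dy`. As `|e^{-k|y-p|}| ≤ 1`, taking the supremum over `p`
gives `2|k| ≤ ‖W‖₁`, which is the Birman–Schwinger bound `‖A(λ)‖ ≥ 1` in one dimension.
-/

lemma exists_sq_eq_and_re_pos_of_mem_slitPlane {z : ℂ} (hz : z ∈ Complex.slitPlane) :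
    ∃ k : ℂ, k ^ 2 = z ∧ 0 < k.re := by
  refine ⟨z ^ (2⁻¹ : ℂ), Complex.cpow_ofNat_inv_pow z 2, ?_⟩
  rw [Complex.cpow_inv_two_re, Real.sqrt_pos]
  rcases Complex.mem_slitPlane_iff.mp hz with hre | him
  · linarith [norm_nonneg z]
  · linarith [neg_abs_le z.re, Complex.abs_re_lt_norm.mpr him]

lemma sub_mem_slitPlane_of_notMem {a : ℝ} {w : ℂ}
    (hw : w ∉ {z : ℂ | ∃ t : ℝ, a ≤ t ∧ z = t}) : (a : ℂ) - w ∈ Complex.slitPlane := by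
  rw [Complex.mem_slitPlane_iff]
  by_contra! h
  refine hw ⟨a - ((a : ℂ) - w).re, by linarith [h.1], Complex.ext ?_ ?_⟩
  · simp
  · simpa using h.2

lemma exists_norm_le_of_hasDerivAt_of_memLp_two {E : Type*} [NormedAddCommGroup E]
    [InnerProductSpace ℝ E] {g g' : ℝ → E}
    (hd : ∀ x, HasDerivAt g (g' x) x) (hg : MemLp g 2) (hg' : MemLp g' 2) :
    ∃ C, ∀ x, ‖g x‖ ≤ C := by
  set h : ℝ → ℝ := fun x => 2 * inner ℝ (g x) (g' x)
  -- `‖g‖²` has derivative `h`, which is integrable by Cauchy–Schwarz and Hölder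
  have hint : Integrable h := by
    refine ((hg.norm.integrable_mul hg'.norm).const_mul 2).mono'
      ((hg.1.inner hg'.1).const_mul 2) (ae_of_all _ fun x => ?_)
    simpa [h, abs_mul] using abs_real_inner_le_norm (g x) (g' x)
  refine ⟨√(‖g 0‖ ^ 2 + ∫ t, ‖h t‖), fun x => Real.le_sqrt_of_sq_le ?_⟩
  have hftc : ∫ t in (0 : ℝ)..x, h t = ‖g x‖ ^ 2 - ‖g 0‖ ^ 2 :=
    intervalIntegral.integral_eq_sub_of_hasDerivAt (fun t _ => (hd t).norm_sq)
      hint.intervalIntegrable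
  have hle : ∫ t in (0 : ℝ)..x, h t ≤ ∫ t, ‖h t‖ :=
    (Real.le_norm_self _).trans <| intervalIntegral.norm_integral_le_integral_norm_uIoc.trans <|
      setIntegral_le_integral hint.norm (ae_of_all _ fun _ => norm_nonneg _)
  linarith

lemma norm_cexp_neg_mul_ofReal_le_one {k : ℂ} (hk : 0 ≤ k.re) {t : ℝ} (ht : 0 ≤ t) :
    ‖Complex.exp (-(k * t))‖ ≤ 1 := by
  rw [Complex.norm_exp, Real.exp_le_one_iff]
  simpa using mul_nonneg hk ht

lemma tendsto_cexp_neg_mul_sub_mul_atTop {k : ℂ} (hk : 0 < k.re) (p : ℝ) {g : ℝ → ℂ}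
    (hg : ∃ C, ∀ x, ‖g x‖ ≤ C) :
    Tendsto (fun y : ℝ => Complex.exp (-(k * ↑(y - p))) * g y) atTop (𝓝 0) := by
  refine Tendsto.zero_mul_isBoundedUnder_le ?_ (isBoundedUnder_of hg)
  refine Complex.tendsto_exp_comap_re_atBot.comp (tendsto_comap_iff.mpr ?_)
  have : Tendsto (fun y : ℝ => k.re * (y - p)) atTop atTop :=
    (tendsto_atTop_add_const_right _ (-p) tendsto_id).const_mul_atTop hk
  simpa [Function.comp_def] using this

section HalfLine

variable {k : ℂ} {u u' u'' f : ℝ → ℂ}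

lemma integrable_cexp_neg_mul_abs_mul (hk : 0 ≤ k.re) (hf : Integrable f) (p : ℝ) :
    Integrable (fun y : ℝ => Complex.exp (-(k * |y - p|)) * f y) :=
  hf.bdd_mul (by fun_prop) (ae_of_all _ fun y => norm_cexp_neg_mul_ofReal_le_one hk (abs_nonneg _))

lemma integral_Ioi_cexp_neg_mul_abs_mul_eq (hk : 0 < k.re)
    (hu : ∀ x, HasDerivAt u (u' x) x) (hu' : ∀ x, HasDerivAt u' (u'' x) x)
    (hbu : ∃ C, ∀ x, ‖u x‖ ≤ C) (hbu' : ∃ C, ∀ x, ‖u' x‖ ≤ C)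
    (heq : ∀ x, u'' x = k ^ 2 * u x - f x) (hf : Integrable f) (p : ℝ) :
    ∫ y in Ioi p, Complex.exp (-(k * |y - p|)) * f y = k * u p + u' p := by
  set e : ℝ → ℂ := fun y => Complex.exp (-(k * ↑(y - p)))
  have he : ∀ y, HasDerivAt e (-k * e y) y := fun y => by
    have := ((((hasDerivAt_id y).sub_const p).ofReal_comp).const_mul k).neg.cexp
    simpa [e, mul_comm] using this
  -- `-e (k u + u')` is a primitive of `e f` because `u'' = k² u - f`
  have hprim : ∀ y ∈ Ici p, HasDerivAt (fun y => -(e y * (k * u y + u' y)))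
      (Complex.exp (-(k * |y - p|)) * f y) y := fun y hy => by
    refine ((he y).mul (((hu y).const_mul k).add (hu' y))).neg.congr_deriv ?_
    rw [abs_of_nonneg (sub_nonneg.mpr hy), heq]
    simp only [e, Pi.add_apply]
    ring
  have hbdd : ∃ C, ∀ x, ‖k * u x + u' x‖ ≤ C := by
    obtain ⟨C, hC⟩ := hbu
    obtain ⟨C', hC'⟩ := hbu'
    exact ⟨‖k‖ * C + C', fun x => (norm_add_le _ _).trans
      (add_le_add (by rw [norm_mul]; gcongr; exact hC x) (hC' x))⟩
  rw [integral_Ioi_of_hasDerivAt_of_tendsto' hprim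
    (integrable_cexp_neg_mul_abs_mul hk.le hf p).integrableOn
    (tendsto_cexp_neg_mul_sub_mul_atTop hk p hbdd).neg]
  simp [e]

lemma integral_cexp_neg_mul_abs_mul_eq (hk : 0 < k.re)
    (hu : ∀ x, HasDerivAt u (u' x) x) (hu' : ∀ x, HasDerivAt u' (u'' x) x)
    (hbu : ∃ C, ∀ x, ‖u x‖ ≤ C) (hbu' : ∃ C, ∀ x, ‖u' x‖ ≤ C)
    (heq : ∀ x, u'' x = k ^ 2 * u x - f x) (hf : Integrable f) (p : ℝ) :
    ∫ y, Complex.exp (-(k * |y - p|)) * f y = 2 * k * u p := by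
  have hright := integral_Ioi_cexp_neg_mul_abs_mul_eq hk hu hu' hbu hbu' heq hf p
  -- the left half-line is the right one for the reflected solution `y ↦ u (-y)`
  have hleft : ∫ y in Iic p, Complex.exp (-(k * |y - p|)) * f y = k * u p - u' p := by
    have hrefl := integral_Ioi_cexp_neg_mul_abs_mul_eq (u := fun y => u (-y))
      (u' := fun y => -u' (-y)) (u'' := fun y => u'' (-y)) (f := fun y => f (-y)) hk
      (fun x => by simpa [Function.comp_def] using (hu (-x)).scomp x (hasDerivAt_neg x))
      (fun x => by simpa [Function.comp_def] using (hu' (-x)).neg.scomp x (hasDerivAt_neg x))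
      (by simpa using hbu.imp fun C hC x => hC (-x))
      (by simpa using hbu'.imp fun C hC x => hC (-x))
      (fun x => heq (-x)) hf.comp_neg (-p)
    rw [show Iic p = Iic (-(-p)) by rw [neg_neg], ← integral_comp_neg_Ioi]
    rw [neg_neg, ← sub_eq_add_neg] at hrefl
    convert hrefl using 5 with y
    rw [show -y - p = -(y - -p) by ring, abs_neg]
  have hint := integrable_cexp_neg_mul_abs_mul hk.le hf p
  rw [← intervalIntegral.integral_Iic_add_Ioi hint.integrableOn hint.integrableOn, hleft, hright]
  ring

end HalfLine

lemma two_mul_norm_le_integral_norm_of_eq {k : ℂ} (hk : 0 < k.re) {u u' u'' W : ℝ → ℂ}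
    (hu : ∀ x, HasDerivAt u (u' x) x) (hu' : ∀ x, HasDerivAt u' (u'' x) x)
    (hbu : ∃ C, ∀ x, ‖u x‖ ≤ C) (hbu' : ∃ C, ∀ x, ‖u' x‖ ≤ C) (hW : Integrable W)
    (heq : ∀ x, u'' x = k ^ 2 * u x - W x * u x) (hne : u ≠ 0) :
    2 * ‖k‖ ≤ ∫ x, ‖W x‖ := by
  obtain ⟨C, hC⟩ := hbu
  have hcont : Continuous u := continuous_iff_continuousAt.mpr fun x => (hu x).continuousAt
  have hWu : Integrable fun x => W x * u x := by
    simpa only [mul_comm] using hW.bdd_mul hcont.aestronglyMeasurable (ae_of_all _ hC)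
  set M := ⨆ x, ‖u x‖
  have hM : ∀ x, ‖u x‖ ≤ M := le_ciSup ⟨C, by rintro _ ⟨x, rfl⟩; exact hC x⟩
  have hpoint : ∀ p, 2 * ‖k‖ * ‖u p‖ ≤ (∫ x, ‖W x‖) * M := fun p => calc
    2 * ‖k‖ * ‖u p‖ = ‖∫ y, Complex.exp (-(k * |y - p|)) * (W y * u y)‖ := by
      rw [integral_cexp_neg_mul_abs_mul_eq hk hu hu' ⟨C, hC⟩ hbu' heq hWu p]
      simp
    _ ≤ ∫ y, ‖W y‖ * M := by
      refine norm_integral_le_of_norm_le (hW.norm.mul_const M) (ae_of_all _ fun y => ?_)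
      rw [norm_mul, norm_mul, ← one_mul (‖W y‖ * M)]
      gcongr
      exacts [norm_cexp_neg_mul_ofReal_le_one hk.le (abs_nonneg _), hM y]
    _ = (∫ x, ‖W x‖) * M := integral_mul_const M _
  obtain ⟨x₀, hx₀⟩ := Function.ne_iff.mp hne
  have hMpos : 0 < M := (norm_pos_iff.mpr hx₀).trans_le (hM x₀)
  refine le_of_mul_le_mul_right ?_ hMpos
  rw [Real.mul_iSup_of_nonneg (by positivity)]
  exact ciSup_le hpoint

lemma integral_norm_sq_sub_two_mul_le {α : Type*} [MeasurableSpace α] {μ : Measure α} {V : α → ℝ}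
    (hV : Integrable V μ) (hV2 : Integrable (fun x => V x ^ 2) μ) (c : ℂ) :
    ∫ x, ‖(V x : ℂ) ^ 2 - 2 * c * V x‖ ∂μ ≤ ∫ x, V x ^ 2 ∂μ + 2 * ‖c‖ * ∫ x, |V x| ∂μ := by
  rw [← integral_const_mul, ← integral_add hV2 (hV.abs.const_mul _)]
  refine integral_mono_of_nonneg (ae_of_all _ fun _ => norm_nonneg _)
    (hV2.add (hV.abs.const_mul _)) (ae_of_all _ fun x => ?_)
  refine (norm_sub_le _ _).trans_eq ?_
  simp [mul_assoc]

theorem stmt14_general (m : ℝ)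
    (V : ℝ → ℝ)
    (hV1 : Integrable V) (hVinf : MemLp V ⊤ (volume : Measure ℝ))
    (lam : ℂ)
    (hlam : lam ^ 2 ∉ {z : ℂ | ∃ t : ℝ, m ^ 2 ≤ t ∧ z = (t : ℂ)})
    (u : ℝ → ℂ) (hu : u ≠ 0)
    (huC2 : ContDiff ℝ 2 u)
    (huL2 : MemLp u 2 (volume : Measure ℝ))
    (hu'L2 : MemLp (deriv u) 2 (volume : Measure ℝ))
    (hu''L2 : MemLp (deriv (deriv u)) 2 (volume : Measure ℝ))
    -- the eigenvalue equation `−u'' + m²u − (V−λ)²u = 0`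
    (heq : ∀ x : ℝ,
      -(deriv (deriv u) x) + (m : ℂ) ^ 2 * u x - ((V x : ℂ) - lam) ^ 2 * u x = 0) :
    4 * ‖(m : ℂ) ^ 2 - lam ^ 2‖ ≤
      (∫ x : ℝ, ‖(V x : ℂ) ^ 2 - 2 * lam * (V x : ℂ)‖) ^ 2 ∧
    2 * Real.sqrt (‖(m : ℂ) ^ 2 - lam ^ 2‖) ≤
      (∫ x : ℝ, (V x) ^ 2) + 2 * ‖lam‖ * ∫ x : ℝ, |V x| := by
  obtain ⟨k, hk2, hk⟩ := exists_sq_eq_and_re_pos_of_mem_slitPlane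
    (by simpa using sub_mem_slitPlane_of_notMem (a := m ^ 2) hlam)
  have hd : ∀ x, HasDerivAt u (deriv u x) x := fun x =>
    (huC2.differentiable two_ne_zero x).hasDerivAt
  have hd' : ∀ x, HasDerivAt (deriv u) (deriv (deriv u) x) x := fun x =>
    ((huC2.deriv' (n := 1)).differentiable one_ne_zero x).hasDerivAt
  have hV2 : Integrable fun x => V x ^ 2 :=
    (hV1.mul_of_top_right hVinf).congr (ae_of_all _ fun x => (sq (V x)).symm)
  have hW : Integrable fun x => (V x : ℂ) ^ 2 - 2 * lam * V x := by
    refine (hV2.ofReal.sub (hV1.ofReal.const_mul (2 * lam))).congr (ae_of_all _ fun x => ?_)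
    simp
  have hbound := two_mul_norm_le_integral_norm_of_eq hk hd hd'
    (exists_norm_le_of_hasDerivAt_of_memLp_two hd huL2 hu'L2)
    (exists_norm_le_of_hasDerivAt_of_memLp_two hd' hu'L2 hu''L2) hW
    (fun x => by linear_combination -heq x - u x * hk2) hu
  have hnorm : ‖(m : ℂ) ^ 2 - lam ^ 2‖ = ‖k‖ ^ 2 := by rw [← hk2, norm_pow]
  refine ⟨by nlinarith [norm_nonneg k], ?_⟩
  rw [hnorm, Real.sqrt_sq (norm_nonneg k)]
  exact hbound.trans (integral_norm_sq_sub_two_mul_le hV1 hV2 lam)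

/-- Birman–Schwinger bound for eigenvalues of the one-dimensional
Klein-Gordon pencil `T_V(λ) = −d²/dx² + m² − (V−λ)²`:
`4|m²−λ²| ≤ ‖V²−2λV‖²_{L¹}` and `2|m²−λ²|^{1/2} ≤ ‖V‖²_{L²} + 2|λ|‖V‖_{L¹}`. -/
theorem stmt14 (m : ℝ) (hm : 0 < m)
    (V : ℝ → ℝ)
    (hV1 : Integrable V) (hVinf : MemLp V ⊤ (volume : Measure ℝ))
    (lam : ℂ)
    (hlam : lam ^ 2 ∉ {z : ℂ | ∃ t : ℝ, m ^ 2 ≤ t ∧ z = (t : ℂ)})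
    (u : ℝ → ℂ) (hu : u ≠ 0)
    (huC2 : ContDiff ℝ 2 u)
    (huL2 : MemLp u 2 (volume : Measure ℝ))
    (hu'L2 : MemLp (deriv u) 2 (volume : Measure ℝ))
    (hu''L2 : MemLp (deriv (deriv u)) 2 (volume : Measure ℝ))
    -- the eigenvalue equation `−u'' + m²u − (V−λ)²u = 0`
    (heq : ∀ x : ℝ,
      -(deriv (deriv u) x) + (m : ℂ) ^ 2 * u x - ((V x : ℂ) - lam) ^ 2 * u x = 0) :
    4 * ‖(m : ℂ) ^ 2 - lam ^ 2‖ ≤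
      (∫ x : ℝ, ‖(V x : ℂ) ^ 2 - 2 * lam * (V x : ℂ)‖) ^ 2 ∧
    2 * Real.sqrt (‖(m : ℂ) ^ 2 - lam ^ 2‖) ≤
      (∫ x : ℝ, (V x) ^ 2) + 2 * ‖lam‖ * ∫ x : ℝ, |V x| :=
  stmt14_general m V hV1 hVinf lam hlam u hu huC2 huL2 hu'L2 hu''L2 heq
end

section
/- Let v₀ > 0, m > 0, a > 0, and consider the square well potential V = −v₀·χ_{[−a,a]} on ℝ. If λ ∈ ℂ with (−v₀−λ)² − m² ∉ (−∞,0] and m² − λ² ∉ (−∞,0], and λ is an eigenvalue of the pencil T_V(λ) = −d²/dx² + m² − (V−λ)² (i.e. there exists nonzero u ∈ H²(ℝ) with T_V(λ)u = 0), then 2·cot(2a·√((v₀+λ)²−m²)) = √((v₀+λ)²−m²)/√(m²−λ²) − √(m²−λ²)/√((v₀+λ)²−m²). -/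
/-!
On each of the intervals `x < -a`, `|x| < a`, `x > a` the equation `u'' = (m² - (V - λ)²) u` has
constant coefficients, so `u` is a combination of `e^{±κx}` outside the well, where
`κ = √(m² - λ²)` has positive real part, and of `e^{±ikx}` inside, where `k = √((v₀ + λ)² - m²)`.
Square integrability kills the growing exponentials, which leaves the boundary conditions
`u'(±a) = ∓κ u(±a)`. Matching these with the interior solution gives a homogeneous linear system
for the two interior coefficients; unless its determinant `(κ + ik)² e^{4iak} - (κ - ik)²`
vanishes, both coefficients vanish and with them `u`. Since
`cot z = i (e^{2iz} + 1) / (e^{2iz} - 1)`, the vanishing determinant is the secular equation.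
-/

open MeasureTheory Filter Set Complex Topology

lemma mem_slitPlane_of_notMem_ofReal_nonpos {z : ℂ}
    (hz : z ∉ {w : ℂ | ∃ t : ℝ, t ≤ 0 ∧ w = (t : ℂ)}) : z ∈ slitPlane := by
  rw [mem_slitPlane_iff_not_le_zero, Complex.le_def]
  rintro ⟨hre, him⟩
  exact hz ⟨z.re, hre, Complex.ext rfl (by simpa using him)⟩

lemma cpow_one_half_re_pos {z : ℂ} (hz : z ∈ slitPlane) : 0 < (z ^ (1 / 2 : ℂ)).re := by
  rw [one_div, cpow_inv_two_re, Real.sqrt_pos]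
  rcases hz with hre | him
  · linarith [norm_nonneg z]
  · linarith [abs_re_lt_norm.2 him, neg_abs_le z.re]

lemma cpow_one_half_sq (z : ℂ) : (z ^ (1 / 2 : ℂ)) ^ 2 = z := by
  rw [one_div]
  exact cpow_ofNat_inv_pow z 2

lemma exists_eq_mul_exp_of_hasDerivAt {w : ℝ → ℂ} {μ : ℂ} {s : Set ℝ} (hs : IsOpen s)
    (hs' : IsPreconnected s) (hw : Continuous w) (hd : ∀ x ∈ s, HasDerivAt w (μ * w x) x) :
    ∃ C, ∀ x ∈ closure s, w x = C * exp (μ * x) := by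
  have hg : ∀ x ∈ s, HasDerivAt (fun x : ℝ => w x * exp (-μ * x)) 0 x := fun x hx =>
    ((hd x hx).mul ((hasDerivAt_id (x : ℂ)).const_mul (-μ)).cexp.comp_ofReal).congr_deriv
      (by ring)
  obtain ⟨C, hC⟩ := hs.exists_is_const_of_deriv_eq_zero hs'
    (fun x hx => (hg x hx).differentiableAt.differentiableWithinAt) (fun x hx => (hg x hx).deriv)
  have hgC : EqOn (fun x : ℝ => w x * exp (-μ * x)) (fun _ => C) (closure s) :=
    EqOn.closure hC (by fun_prop) continuous_const
  refine ⟨C, fun x hx => ?_⟩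
  have hCx : w x * exp (-μ * x) = C := hgC hx
  rw [← hCx, mul_assoc, ← Complex.exp_add]
  simp

lemma exists_eq_exp_add_exp_of_hasDerivAt {u : ℝ → ℂ} {c : ℂ} {s : Set ℝ} (hu : ContDiff ℝ 1 u)
    (hc : c ≠ 0) (hs : IsOpen s) (hs' : IsPreconnected s)
    (hode : ∀ x ∈ s, HasDerivAt (deriv u) (c ^ 2 * u x) x) :
    ∃ A B, ∀ x ∈ closure s, u x = A * exp (c * x) + B * exp (-c * x) ∧
      deriv u x = c * (A * exp (c * x) - B * exp (-c * x)) := by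
  have hu' : ∀ x, HasDerivAt u (deriv u x) x := fun x =>
    (hu.differentiable one_ne_zero x).hasDerivAt
  have hcont : Continuous (deriv u) := hu.continuous_deriv le_rfl
  -- `u' ± c u` solve first-order equations with rates `± c`.
  obtain ⟨C, hC⟩ := exists_eq_mul_exp_of_hasDerivAt (w := fun x => deriv u x + c * u x) (μ := c)
    hs hs' (hcont.add (continuous_const.mul hu.continuous)) fun x hx =>
      ((hode x hx).add ((hu' x).const_mul c)).congr_deriv (by ring)
  obtain ⟨D, hD⟩ := exists_eq_mul_exp_of_hasDerivAt (w := fun x => deriv u x - c * u x) (μ := -c)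
    hs hs' (hcont.sub (continuous_const.mul hu.continuous)) fun x hx =>
      ((hode x hx).sub ((hu' x).const_mul c)).congr_deriv (by ring)
  refine ⟨C / (2 * c), -D / (2 * c), fun x hx => ?_⟩
  have hCx := hC x hx
  have hDx := hD x hx
  rw [neg_mul] at hDx ⊢
  constructor
  · field_simp
    linear_combination hCx - hDx
  · field_simp
    linear_combination hCx + hDx

section SquareIntegrable

variable {u : ℝ → ℂ} {p : ENNReal}

lemma MeasureTheory.MemLp.not_tendsto_norm_atTop (hu : MemLp u p volume) (hp : p ≠ 0)
    (hp' : p ≠ ⊤) : ¬ Tendsto (fun x => ‖u x‖) atTop atTop := by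
  intro h
  obtain ⟨R, hR⟩ := eventually_atTop.1 (h.eventually_ge_atTop 1)
  have hsub : Ici R ⊆ {x | (1 : NNReal) ≤ ‖u x‖₊} := fun x hx => by
    simpa [← NNReal.coe_le_coe] using hR x hx
  have := (measure_mono hsub).trans_lt (hu.meas_ge_lt_top hp hp' one_ne_zero)
  simp at this

lemma coeff_eq_zero_of_memLp_of_eq_exp (hu : MemLp u p volume) (hp : p ≠ 0) (hp' : p ≠ ⊤)
    {κ A B : ℂ} (hκ : 0 < κ.re) {R : ℝ}
    (h : ∀ x, R ≤ x → u x = A * exp (κ * x) + B * exp (-κ * x)) : A = 0 := by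
  by_contra hA
  refine hu.not_tendsto_norm_atTop hp hp' ?_
  have hre : Tendsto (fun x : ℝ => κ.re * x) atTop atTop := tendsto_id.const_mul_atTop hκ
  have hgrow : Tendsto (fun x : ℝ => ‖A‖ * Real.exp (κ.re * x)) atTop atTop :=
    (Real.tendsto_exp_atTop.comp hre).const_mul_atTop (norm_pos_iff.2 hA)
  have hdecay : Tendsto (fun x : ℝ => ‖B‖ * Real.exp (-(κ.re * x))) atTop (𝓝 0) := by
    simpa using (Real.tendsto_exp_atBot.comp (tendsto_neg_atTop_atBot.comp hre)).const_mul ‖B‖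
  refine tendsto_atTop_mono' _ ?_ (hgrow.atTop_add hdecay.neg)
  filter_upwards [eventually_ge_atTop R] with x hx
  rw [h x hx]
  calc ‖A‖ * Real.exp (κ.re * x) + -(‖B‖ * Real.exp (-(κ.re * x)))
      = ‖A * exp (κ * x)‖ - ‖B * exp (-κ * x)‖ := by
        simp [Complex.norm_exp, Complex.mul_re, sub_eq_add_neg]
    _ ≤ ‖A * exp (κ * x) + B * exp (-κ * x)‖ := norm_sub_le_norm_add _ _

variable {κ : ℂ} {b : ℝ}

lemma exists_eq_exp_of_memLp_of_hasDerivAt_Ioi (hu : ContDiff ℝ 1 u) (hL : MemLp u p volume)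
    (hp : p ≠ 0) (hp' : p ≠ ⊤) (hκ : 0 < κ.re)
    (hode : ∀ x ∈ Ioi b, HasDerivAt (deriv u) (κ ^ 2 * u x) x) :
    ∃ B, ∀ x ∈ Ici b, u x = B * exp (-κ * x) ∧ deriv u x = -κ * (B * exp (-κ * x)) := by
  have hκ0 : κ ≠ 0 := fun h => by simp [h] at hκ
  obtain ⟨A, B, hAB⟩ := exists_eq_exp_add_exp_of_hasDerivAt hu hκ0 isOpen_Ioi
    isPreconnected_Ioi hode
  rw [closure_Ioi] at hAB
  have hA : A = 0 := coeff_eq_zero_of_memLp_of_eq_exp hL hp hp' hκ fun x hx => (hAB x hx).1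
  refine ⟨B, fun x hx => ?_⟩
  obtain ⟨hux, hdux⟩ := hAB x hx
  exact ⟨by rw [hux, hA]; ring, by rw [hdux, hA]; ring⟩

lemma exists_eq_exp_of_memLp_of_hasDerivAt_Iio (hu : ContDiff ℝ 1 u) (hL : MemLp u p volume)
    (hp : p ≠ 0) (hp' : p ≠ ⊤) (hκ : 0 < κ.re)
    (hode : ∀ x ∈ Iio b, HasDerivAt (deriv u) (κ ^ 2 * u x) x) :
    ∃ A, ∀ x ∈ Iic b, u x = A * exp (κ * x) ∧ deriv u x = κ * (A * exp (κ * x)) := by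
  have hκ0 : κ ≠ 0 := fun h => by simp [h] at hκ
  obtain ⟨A, B, hAB⟩ := exists_eq_exp_add_exp_of_hasDerivAt hu hκ0 isOpen_Iio
    isPreconnected_Iio hode
  rw [closure_Iio] at hAB
  have hB : B = 0 := by
    refine coeff_eq_zero_of_memLp_of_eq_exp (u := u ∘ Neg.neg) (R := -b) (B := A)
      (hL.comp_measurePreserving (Measure.measurePreserving_neg volume)) hp hp' hκ fun x hx => ?_
    rw [Function.comp_apply, (hAB (-x) (by simpa [neg_le] using hx)).1]
    push_cast
    ring_nf
  refine ⟨A, fun x hx => ?_⟩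
  obtain ⟨hux, hdux⟩ := hAB x hx
  exact ⟨by rw [hux, hB]; ring, by rw [hdux, hB]; ring⟩

lemma sq_mul_exp_sq_eq_of_square_well {a : ℝ} (ha : 0 < a) {k : ℂ} (hκ : 0 < κ.re) (hk : k ≠ 0)
    (hu : ContDiff ℝ 1 u) (hL : MemLp u p volume) (hp : p ≠ 0) (hp' : p ≠ ⊤) (hu0 : u ≠ 0)
    (hright : ∀ x ∈ Ioi a, HasDerivAt (deriv u) (κ ^ 2 * u x) x)
    (hleft : ∀ x ∈ Iio (-a), HasDerivAt (deriv u) (κ ^ 2 * u x) x)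
    (hwell : ∀ x ∈ Ioo (-a) a, HasDerivAt (deriv u) ((I * k) ^ 2 * u x) x) :
    (κ + I * k) ^ 2 * exp (2 * a * k * I) ^ 2 = (κ - I * k) ^ 2 := by
  obtain ⟨B, hB⟩ := exists_eq_exp_of_memLp_of_hasDerivAt_Ioi hu hL hp hp' hκ hright
  obtain ⟨A, hA⟩ := exists_eq_exp_of_memLp_of_hasDerivAt_Iio hu hL hp hp' hκ hleft
  obtain ⟨P, Q, hPQ⟩ := exists_eq_exp_add_exp_of_hasDerivAt hu (mul_ne_zero I_ne_zero hk)
    isOpen_Ioo isPreconnected_Ioo hwell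
  rw [closure_Ioo (by linarith)] at hPQ
  obtain ⟨hBa, hB'a⟩ := hB a self_mem_Ici
  obtain ⟨hAa, hA'a⟩ := hA (-a) self_mem_Iic
  obtain ⟨hPa, hP'a⟩ := hPQ a (right_mem_Icc.2 (by linarith))
  obtain ⟨hPma, hP'ma⟩ := hPQ (-a) (left_mem_Icc.2 (by linarith))
  have hma : ∀ c : ℂ, exp (c * ((-a : ℝ) : ℂ)) = exp (-c * a) := fun c => by push_cast; ring_nf
  rw [hma] at hAa hA'a
  rw [hma, hma, neg_neg] at hPma hP'ma
  set E := exp (I * k * a)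
  set F := exp (-(I * k) * a)
  set G := exp (-κ * a)
  have hEF : E * F = 1 := by rw [← Complex.exp_add]; ring_nf; exact exp_zero
  have hE2 : exp (2 * a * k * I) = E ^ 2 := by rw [← Complex.exp_nat_mul]; ring_nf
  have hright_a : (κ + I * k) * P * E ^ 2 + (κ - I * k) * Q = 0 := by
    linear_combination E * (κ * hBa + hB'a - κ * hPa - hP'a) - (κ - I * k) * Q * hEF
  have hleft_a : (κ - I * k) * P + (κ + I * k) * Q * E ^ 2 = 0 := by
    linear_combination E * (κ * hAa - hA'a - κ * hPma + hP'ma) - (κ - I * k) * P * hEF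
  rw [hE2, ← sub_eq_zero]
  by_contra hD
  have hP : P = 0 := by
    refine (mul_eq_zero.1 ?_).resolve_left hD
    linear_combination (κ + I * k) * E ^ 2 * hright_a - (κ - I * k) * hleft_a
  have hQ : Q = 0 := by
    refine (mul_eq_zero.1 ?_).resolve_left hD
    linear_combination (κ + I * k) * E ^ 2 * hleft_a - (κ - I * k) * hright_a
  have hG : G ≠ 0 := exp_ne_zero _
  have hB0 : B = 0 := by
    refine (mul_eq_zero.1 ?_).resolve_right hG
    rw [← hBa, hPa, hP, hQ]; ring
  have hA0 : A = 0 := by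
    refine (mul_eq_zero.1 ?_).resolve_right hG
    rw [← hAa, hPma, hP, hQ]; ring
  refine hu0 (funext fun x => ?_)
  rcases le_or_gt x (-a) with hx | hx
  · simp [(hA x hx).1, hA0]
  rcases le_or_gt x a with hx' | hx'
  · simp [(hPQ x ⟨hx.le, hx'⟩).1, hP, hQ]
  · simp [(hB x hx'.le).1, hB0]

end SquareIntegrable

lemma two_mul_cot_eq_of_sq_mul_exp_sq_eq {κ k z : ℂ} (hκ : κ ≠ 0) (hk : k ≠ 0)
    (h : (κ + I * k) ^ 2 * exp (z * I) ^ 2 = (κ - I * k) ^ 2) :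
    2 * cot z = k / κ - κ / k := by
  rw [cot_eq_cos_div_sin, Complex.cos, Complex.sin, neg_mul, Complex.exp_neg]
  set X := exp (z * I)
  have hX : X ≠ 0 := exp_ne_zero _
  have hsin : 1 - X ^ 2 ≠ 0 := by
    intro h0
    have : 4 * I * κ * k = 0 := by linear_combination h + (κ + I * k) ^ 2 * h0
    simp [hκ, hk, I_ne_zero] at this
  field_simp
  linear_combination (-I) * h + (2 * (X ^ 2 + 1) * k * κ + (X ^ 2 - 1) * k ^ 2 * I) * I_sq
theorem stmt19_general (v₀ m a : ℝ) (ha : 0 < a)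
    (V : ℝ → ℝ) (hV : ∀ x, V x = if x ∈ Set.Icc (-a) a then -v₀ else 0)
    (lam : ℂ)
    (h1 : (((v₀ : ℂ) + lam) ^ 2 - (m : ℂ) ^ 2) ∉ {z : ℂ | ∃ t : ℝ, t ≤ 0 ∧ z = (t : ℂ)})
    (h2 : ((m : ℂ) ^ 2 - lam ^ 2) ∉ {z : ℂ | ∃ t : ℝ, t ≤ 0 ∧ z = (t : ℂ)})
    (u : ℝ → ℂ) (hu : u ≠ 0)
    (huC1 : ContDiff ℝ 1 u)
    (huL2 : MemLp u 2 (volume : Measure ℝ))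
    (heq : ∀ x : ℝ, x ≠ -a → x ≠ a →
      HasDerivAt (deriv u) (((m : ℂ) ^ 2 - ((V x : ℂ) - lam) ^ 2) * u x) x) :
    2 * Complex.cot (2 * (a : ℂ) * ((((v₀ : ℂ) + lam) ^ 2 - (m : ℂ) ^ 2) ^ (1 / 2 : ℂ)))
      = ((((v₀ : ℂ) + lam) ^ 2 - (m : ℂ) ^ 2) ^ (1 / 2 : ℂ)) /
          (((m : ℂ) ^ 2 - lam ^ 2) ^ (1 / 2 : ℂ))
        - (((m : ℂ) ^ 2 - lam ^ 2) ^ (1 / 2 : ℂ)) /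
          ((((v₀ : ℂ) + lam) ^ 2 - (m : ℂ) ^ 2) ^ (1 / 2 : ℂ)) := by
  set κ := ((m : ℂ) ^ 2 - lam ^ 2) ^ (1 / 2 : ℂ)
  set k := (((v₀ : ℂ) + lam) ^ 2 - (m : ℂ) ^ 2) ^ (1 / 2 : ℂ)
  have hκ : 0 < κ.re := cpow_one_half_re_pos (mem_slitPlane_of_notMem_ofReal_nonpos h2)
  have hk : k ≠ 0 := fun h0 => slitPlane_ne_zero (mem_slitPlane_of_notMem_ofReal_nonpos h1) <| by
    rw [← cpow_one_half_sq (((v₀ : ℂ) + lam) ^ 2 - (m : ℂ) ^ 2)]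
    exact (congrArg (· ^ 2) h0).trans (zero_pow two_ne_zero)
  have hout : ∀ x, a < x ∨ x < -a → HasDerivAt (deriv u) (κ ^ 2 * u x) x := fun x hx => by
    have hV0 : V x = 0 := by
      rw [hV, if_neg]; rintro ⟨hl, hr⟩; rcases hx with hx | hx <;> linarith
    convert heq x (by rintro rfl; rcases hx with hx | hx <;> linarith)
      (by rintro rfl; rcases hx with hx | hx <;> linarith) using 2
    rw [hV0, cpow_one_half_sq]; push_cast; ring
  have hwell : ∀ x ∈ Ioo (-a) a, HasDerivAt (deriv u) ((I * k) ^ 2 * u x) x := fun x hx => by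
    convert heq x hx.1.ne' hx.2.ne using 2
    rw [hV, if_pos (Ioo_subset_Icc_self hx), mul_pow, I_sq, cpow_one_half_sq]; push_cast; ring
  exact two_mul_cot_eq_of_sq_mul_exp_sq_eq (fun h0 => by simp [h0] at hκ) hk
    (sq_mul_exp_sq_eq_of_square_well ha hκ hk huC1 huL2 two_ne_zero ENNReal.ofNat_ne_top hu
      (fun x hx => hout x (Or.inl hx)) (fun x hx => hout x (Or.inr hx)) hwell)

/-- the secular equation for eigenvalues of the Klein-Gordon pencil with
a square well potential `V = −v₀·χ_{[−a,a]}`. Square roots are principal branches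
(`cpow` with exponent `1/2`); the hypotheses guarantee both radicands avoid `(−∞,0]`.
An `H²` eigenfunction is encoded as a `C¹` function `u ∈ L²`, nonzero, solving the
eigenvalue equation `u'' = (m² − (V−λ)²)u` classically away from `x = ±a`. -/
theorem stmt19 (v₀ m a : ℝ) (hv₀ : 0 < v₀) (hm : 0 < m) (ha : 0 < a)
    (V : ℝ → ℝ) (hV : ∀ x, V x = if x ∈ Set.Icc (-a) a then -v₀ else 0)
    (lam : ℂ)
    (h1 : (((v₀ : ℂ) + lam) ^ 2 - (m : ℂ) ^ 2) ∉ {z : ℂ | ∃ t : ℝ, t ≤ 0 ∧ z = (t : ℂ)})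
    (h2 : ((m : ℂ) ^ 2 - lam ^ 2) ∉ {z : ℂ | ∃ t : ℝ, t ≤ 0 ∧ z = (t : ℂ)})
    (u : ℝ → ℂ) (hu : u ≠ 0)
    (huC1 : ContDiff ℝ 1 u)
    (huL2 : MemLp u 2 (volume : Measure ℝ))
    (heq : ∀ x : ℝ, x ≠ -a → x ≠ a →
      HasDerivAt (deriv u) (((m : ℂ) ^ 2 - ((V x : ℂ) - lam) ^ 2) * u x) x) :
    2 * Complex.cot (2 * (a : ℂ) * ((((v₀ : ℂ) + lam) ^ 2 - (m : ℂ) ^ 2) ^ (1 / 2 : ℂ)))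
      = ((((v₀ : ℂ) + lam) ^ 2 - (m : ℂ) ^ 2) ^ (1 / 2 : ℂ)) /
          (((m : ℂ) ^ 2 - lam ^ 2) ^ (1 / 2 : ℂ))
        - (((m : ℂ) ^ 2 - lam ^ 2) ^ (1 / 2 : ℂ)) /
          ((((v₀ : ℂ) + lam) ^ 2 - (m : ℂ) ^ 2) ^ (1 / 2 : ℂ)) :=
  stmt19_general v₀ m a ha V hV lam h1 h2 u hu huC1 huL2 heq
end
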